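/- Let k₁ > k₂ > 0 and define ψ : ℝ₋² → ℝ by ψ(t₁,t₂) = max(k₁t₁, k₂t₂). Then Θ_ψ := {a ∈ ℝ₊²̄ : ∃ t ∈ ℝ₋², a₁t₁ + a₂t₂ ≥ ψ(t)} equals the triangle {a ∈ ℝ₊²̄ : a₁/k₁ + a₂/k₂ ≤ 1}, and hence 2!·Vol(Θ_ψ) = k₁k₂. -/

import Mathlib

/-!
For `t < 0` put `s = max (k₁ t₁) (k₂ t₂) < 0`; then `tᵢ ≤ s / kᵢ`, so for `a ≥ 0` we get
`a₁ t₁ + a₂ t₂ ≤ s (a₁/k₁ + a₂/k₂)`, and `s ≤ a₁ t₁ + a₂ t₂` forces `a₁/k₁ + a₂/k₂ ≤ 1`.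
Conversely `t = (-1/k₁, -1/k₂)` is a witness for every point of the triangle. The triangle lies
between the graphs of `0` and `k₂ (1 - x/k₁)` over `[0, k₁]`, so its area is `k₁ k₂ / 2`.
-/

open MeasureTheory Set

theorem volume_region_between_cc_eq_lintegral {α : Type*} [MeasurableSpace α] {μ : Measure α}
    {f g : α → ℝ} {s : Set α} (hf : Measurable f) (hg : Measurable g) (hs : MeasurableSet s) :
    μ.prod volume {p : α × ℝ | p.1 ∈ s ∧ p.2 ∈ Icc (f p.1) (g p.1)} =
      ∫⁻ x in s, ENNReal.ofReal (g x - f x) ∂μ := by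
  have slice : ∀ x, volume (Prod.mk x ⁻¹' {p : α × ℝ | p.1 ∈ s ∧ p.2 ∈ Icc (f p.1) (g p.1)}) =
      s.indicator (fun x => ENNReal.ofReal (g x - f x)) x := by
    intro x
    by_cases hx : x ∈ s
    · have : Prod.mk x ⁻¹' {p : α × ℝ | p.1 ∈ s ∧ p.2 ∈ Icc (f p.1) (g p.1)} = Icc (f x) (g x) := by
        ext; simp [hx]
      rw [this, Real.volume_Icc, indicator_of_mem hx]
    · simp [hx, preimage]
  rw [Measure.prod_apply (measurableSet_region_between_cc hf hg hs), lintegral_congr slice,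
    lintegral_indicator hs]

theorem integral_Icc_mul_one_sub_div {b : ℝ} (hb : 0 < b) (c : ℝ) :
    ∫ x in Icc 0 b, c * (1 - x / b) = b * c / 2 := by
  have : (fun x => c * (1 - x / b)) = fun x => c - c / b * x := by funext; ring
  rw [integral_Icc_eq_integral_Ioc, ← intervalIntegral.integral_of_le hb.le, this,
    intervalIntegral.integral_sub intervalIntegrable_const
      (intervalIntegral.intervalIntegrable_id.const_mul _),
    intervalIntegral.integral_const_mul, integral_id, intervalIntegral.integral_const]
  field_simp
  ring

theorem volume_triangle_prod {k₁ k₂ : ℝ} (hk₁ : 0 < k₁) (hk₂ : 0 < k₂) :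
    volume {p : ℝ × ℝ | 0 ≤ p.1 ∧ 0 ≤ p.2 ∧ p.1 / k₁ + p.2 / k₂ ≤ 1} =
      ENNReal.ofReal (k₁ * k₂ / 2) := by
  have htri : {p : ℝ × ℝ | 0 ≤ p.1 ∧ 0 ≤ p.2 ∧ p.1 / k₁ + p.2 / k₂ ≤ 1} =
      {p : ℝ × ℝ | p.1 ∈ Icc 0 k₁ ∧ p.2 ∈ Icc 0 (k₂ * (1 - p.1 / k₁))} := by
    ext ⟨x, y⟩
    simp only [mem_ofPred_eq, mem_Icc, ← div_le_one hk₁, ← div_le_iff₀' hk₂, le_sub_iff_add_le']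
    constructor
    · rintro ⟨hx, hy, h⟩
      exact ⟨⟨hx, by linarith [div_nonneg hy hk₂.le]⟩, hy, h⟩
    · rintro ⟨⟨hx, -⟩, hy, h⟩
      exact ⟨hx, hy, h⟩
  have hnonneg : 0 ≤ᵐ[volume.restrict (Icc 0 k₁)] fun x => k₂ * (1 - x / k₁) := by
    refine ae_restrict_of_forall_mem measurableSet_Icc fun x hx => ?_
    have : x / k₁ ≤ 1 := (div_le_one hk₁).2 hx.2
    have : 0 ≤ 1 - x / k₁ := by linarith
    positivity
  rw [htri, Measure.volume_eq_prod, volume_region_between_cc_eq_lintegral (f := fun _ => 0)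
    (g := fun x => k₂ * (1 - x / k₁)) measurable_const (by fun_prop) measurableSet_Icc]
  simp only [sub_zero]
  rw [← ofReal_integral_eq_lintegral_ofReal (Continuous.integrableOn_Icc (by fun_prop)) hnonneg,
    integral_Icc_mul_one_sub_div hk₁]

theorem div_add_div_le_one_of_max_le {k₁ k₂ a₁ a₂ t₁ t₂ : ℝ} (hk₁ : 0 < k₁) (hk₂ : 0 < k₂)
    (ha₁ : 0 ≤ a₁) (ha₂ : 0 ≤ a₂) (ht₁ : t₁ < 0) (ht₂ : t₂ < 0)
    (h : max (k₁ * t₁) (k₂ * t₂) ≤ a₁ * t₁ + a₂ * t₂) : a₁ / k₁ + a₂ / k₂ ≤ 1 := by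
  set s := max (k₁ * t₁) (k₂ * t₂)
  have hs : s < 0 := max_lt (mul_neg_of_pos_of_neg hk₁ ht₁) (mul_neg_of_pos_of_neg hk₂ ht₂)
  have ht₁s : t₁ ≤ s / k₁ := (le_div_iff₀' hk₁).2 (le_max_left _ _)
  have ht₂s : t₂ ≤ s / k₂ := (le_div_iff₀' hk₂).2 (le_max_right _ _)
  have : s * 1 ≤ s * (a₁ / k₁ + a₂ / k₂) :=
    calc s * 1 ≤ a₁ * t₁ + a₂ * t₂ := by rw [mul_one]; exact h
      _ ≤ a₁ * (s / k₁) + a₂ * (s / k₂) := by gcongr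
      _ = s * (a₁ / k₁ + a₂ / k₂) := by ring
  exact (mul_le_mul_left_of_neg hs).1 this

theorem setOf_exists_max_le_eq_triangle {k₁ k₂ : ℝ} (hk₁ : 0 < k₁) (hk₂ : 0 < k₂) :
    {a : Fin 2 → ℝ | (∀ i, 0 ≤ a i) ∧ ∃ t : Fin 2 → ℝ, (∀ i, t i < 0) ∧
        max (k₁ * t 0) (k₂ * t 1) ≤ a 0 * t 0 + a 1 * t 1} =
      {a : Fin 2 → ℝ | (∀ i, 0 ≤ a i) ∧ a 0 / k₁ + a 1 / k₂ ≤ 1} := by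
  ext a
  refine and_congr_right fun ha => ⟨?_, fun h => ?_⟩
  · rintro ⟨t, ht, hle⟩
    exact div_add_div_le_one_of_max_le hk₁ hk₂ (ha 0) (ha 1) (ht 0) (ht 1) hle
  · refine ⟨![-k₁⁻¹, -k₂⁻¹], fun i => ?_, ?_⟩
    · fin_cases i <;> simp [hk₁, hk₂]
    · simp only [div_eq_mul_inv] at h
      simp [hk₁.ne', hk₂.ne']
      linarith

theorem volume_triangle_fin_two {k₁ k₂ : ℝ} (hk₁ : 0 < k₁) (hk₂ : 0 < k₂) :
    volume {a : Fin 2 → ℝ | (∀ i, 0 ≤ a i) ∧ a 0 / k₁ + a 1 / k₂ ≤ 1} =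
      ENNReal.ofReal (k₁ * k₂ / 2) := by
  rw [← volume_triangle_prod hk₁ hk₂,
    ← (volume_preserving_finTwoArrow ℝ).measure_preimage_equiv]
  congr 1
  ext a
  simp [Fin.forall_fin_two, and_assoc]

/-- For `ψ(t) = max(k₁t₁, k₂t₂)` with `k₁ > k₂ > 0`, the set
`Θ_ψ` is the triangle `{a ≥ 0 : a₁/k₁ + a₂/k₂ ≤ 1}`, whose volume times `2!`
equals `k₁k₂`. -/
theorem stmt11 (k₁ k₂ : ℝ) (hk : k₁ > k₂) (hk₂ : k₂ > 0)
    (ψ : (Fin 2 → ℝ) → ℝ) (hψ : ∀ t, ψ t = max (k₁ * t 0) (k₂ * t 1)) :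
    {a : Fin 2 → ℝ | (∀ k, 0 ≤ a k) ∧
        ∃ t : Fin 2 → ℝ, (∀ k, t k < 0) ∧ ψ t ≤ a 0 * t 0 + a 1 * t 1} =
      {a : Fin 2 → ℝ | (∀ k, 0 ≤ a k) ∧ a 0 / k₁ + a 1 / k₂ ≤ 1} ∧
    2 * volume {a : Fin 2 → ℝ | (∀ k, 0 ≤ a k) ∧
        ∃ t : Fin 2 → ℝ, (∀ k, t k < 0) ∧ ψ t ≤ a 0 * t 0 + a 1 * t 1} =
      ENNReal.ofReal (k₁ * k₂) := by
  have hk₁ : 0 < k₁ := hk₂.trans hk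
  have hΘ := setOf_exists_max_le_eq_triangle hk₁ hk₂
  simp only [← hψ] at hΘ
  refine ⟨hΘ, ?_⟩
  rw [hΘ, volume_triangle_fin_two hk₁ hk₂, ← ENNReal.ofReal_ofNat 2,
    ← ENNReal.ofReal_mul zero_le_two]
  congr 1
  ring
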